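/- Let b > 0 and let μ_b denote the Laplace measure on ℝ with scale b, i.e. the measure on ℝ with density x ↦ (1/(2b)) * exp(-|x|/b) with respect to Lebesgue measure. For any two real numbers a₁, a₂ and any measurable set S ⊆ ℝ, the shifted Laplace measures satisfy μ_b(S - a₁) ≤ exp(|a₁ - a₂|/b) * μ_b(S - a₂); equivalently, the probability that a₁ plus Laplace(b) noise lands in S is at most exp(|a₁ - a₂|/b) times the probability that a₂ plus Laplace(b) noise lands in S. -/

import Mathlib

/-! Translation invariance of Lebesgue measure turns `μ_b(S - a)` into the integral over `S`
of the shifted density `x ↦ p(x - a)`, and by the triangle inequality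
`p(x - a₁) ≤ e^{|a₁ - a₂|/b} p(x - a₂)` pointwise. -/

open MeasureTheory Real

/-- The Laplace measure on ℝ with scale `b`: density `x ↦ (1/(2b)) * exp (-|x|/b)`
with respect to Lebesgue measure. -/
noncomputable def laplaceMeasure (b : ℝ) : Measure ℝ :=
  MeasureTheory.volume.withDensity fun x => ENNReal.ofReal ((1 / (2 * b)) * Real.exp (-|x| / b))

open scoped ENNReal

section Translate

variable {G : Type*} [MeasurableSpace G] [AddGroup G] [MeasurableAdd G]
  (μ : Measure G) [μ.IsAddRightInvariant]

theorem withDensity_image_sub_right (f : G → ℝ≥0∞) (a : G) {S : Set G}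
    (hS : MeasurableSet S) :
    μ.withDensity f ((· - a) '' S) = ∫⁻ x in S, f (x - a) ∂μ := by
  have hemb := (MeasurableEquiv.subRight a).measurableEmbedding
  exact (withDensity_apply f (hemb.measurableSet_image.2 hS)).trans
    ((measurePreserving_sub_right μ a).setLIntegral_comp_emb hemb f S).symm

theorem withDensity_image_sub_right_le (f : G → ℝ≥0∞) {C : ℝ≥0∞} (hC : C ≠ ∞) (a₁ a₂ : G)
    (hf : ∀ x, f (x - a₁) ≤ C * f (x - a₂)) {S : Set G} (hS : MeasurableSet S) :
    μ.withDensity f ((· - a₁) '' S) ≤ C * μ.withDensity f ((· - a₂) '' S) := by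
  rw [withDensity_image_sub_right μ f a₁ hS, withDensity_image_sub_right μ f a₂ hS,
    ← lintegral_const_mul' _ _ hC]
  exact lintegral_mono hf

end Translate

theorem exp_neg_abs_sub_div_le {b : ℝ} (hb : 0 ≤ b) (x a₁ a₂ : ℝ) :
    exp (-|x - a₁| / b) ≤ exp (|a₁ - a₂| / b) * exp (-|x - a₂| / b) := by
  rw [← exp_add, ← add_div, exp_le_exp]
  gcongr
  linarith [abs_sub_le x a₁ a₂, abs_sub_comm a₁ a₂]

/-- For any two shifts `a₁, a₂` and any measurable set `S ⊆ ℝ`, the shifted Laplace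
measures satisfy `μ_b(S - a₁) ≤ exp(|a₁ - a₂|/b) * μ_b(S - a₂)`. -/
theorem laplace_shift_ratio_bound (b : ℝ) (hb : 0 < b) (a₁ a₂ : ℝ) (S : Set ℝ)
    (hS : MeasurableSet S) :
    laplaceMeasure b ((fun x => x - a₁) '' S) ≤
      ENNReal.ofReal (Real.exp (|a₁ - a₂| / b)) *
        laplaceMeasure b ((fun x => x - a₂) '' S) := by
  refine withDensity_image_sub_right_le volume _ ENNReal.ofReal_ne_top a₁ a₂ (fun x => ?_) hS
  rw [← ENNReal.ofReal_mul (exp_nonneg _), mul_left_comm]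
  gcongr
  exact exp_neg_abs_sub_div_le hb.le x a₁ a₂
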